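/- arXiv:2206.06140 — 2 statements merged into one kernel-verified Lean document; each statement's English description precedes it below -/
import Mathlib

section
/- For all a ∈ ℝ^q and b ∈ ℝ, E|⟨a, W⟩ + b| ≥ (η/2) ‖a‖. -/
/-!
Centre the linear form: `⟪a, W⟫ + b = X + c` with `X = ⟪a, W - μ⟫` of mean zero and `c` constant.
For a mean-zero `X`, `|c| = |E (X + c)| ≤ E|X + c|` and `E|X| ≤ E|X + c| + |c|`, so
`E|X + c| ≥ E|X| / 2`, and `E|X| ≥ η ‖a‖` by applying the hypothesis to `a / ‖a‖`.
-/

open MeasureTheory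
open scoped RealInnerProductSpace

section

variable {Ω : Type*} [MeasurableSpace Ω] {P : Measure Ω}

theorem half_integral_abs_le_integral_abs_add_const [IsProbabilityMeasure P] {X : Ω → ℝ}
    (hX : Integrable X P) (hmean : ∫ ω, X ω ∂P = 0) (c : ℝ) :
    (∫ ω, |X ω| ∂P) / 2 ≤ ∫ ω, |X ω + c| ∂P := by
  have hXc : Integrable (fun ω => X ω + c) P := hX.add (integrable_const c)
  have hc : |c| ≤ ∫ ω, |X ω + c| ∂P := by
    calc |c| = |∫ ω, (X ω + c) ∂P| := by
          rw [integral_add hX (integrable_const c), hmean, integral_const]; simp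
      _ ≤ ∫ ω, |X ω + c| ∂P := abs_integral_le_integral_abs
  have hX_le : ∫ ω, |X ω| ∂P ≤ ∫ ω, |X ω + c| ∂P + |c| := by
    calc ∫ ω, |X ω| ∂P ≤ ∫ ω, (|X ω + c| + |c|) ∂P := by
          refine integral_mono hX.abs (hXc.abs.add (integrable_const _)) fun ω => ?_
          simpa using abs_sub (X ω + c) c
      _ = ∫ ω, |X ω + c| ∂P + |c| := by
          rw [integral_add hXc.abs (integrable_const _), integral_const]; simp
  linarith

variable {E : Type*} [NormedAddCommGroup E] [InnerProductSpace ℝ E]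

theorem integral_inner_sub_integral [CompleteSpace E] [IsProbabilityMeasure P] {W : Ω → E}
    (hW : Integrable W P) (a : E) :
    ∫ ω, ⟪a, W ω - ∫ ω', W ω' ∂P⟫ ∂P = 0 := by
  rw [integral_inner (f := fun ω => W ω - ∫ ω', W ω' ∂P) (hW.sub (integrable_const _)),
    integral_sub hW (integrable_const _), integral_const]
  simp

theorem mul_norm_le_integral_abs_inner {Y : Ω → E} {η : ℝ}
    (hunit : ∀ u : E, ‖u‖ = 1 → η ≤ ∫ ω, |⟪u, Y ω⟫| ∂P) (a : E) :
    η * ‖a‖ ≤ ∫ ω, |⟪a, Y ω⟫| ∂P := by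
  rcases eq_or_ne a 0 with rfl | ha
  · simp
  have hna : 0 < ‖a‖ := norm_pos_iff.mpr ha
  have hscale : ∀ ω, |⟪a, Y ω⟫| = ‖a‖ * |⟪‖a‖⁻¹ • a, Y ω⟫| := fun ω => by
    rw [real_inner_smul_left, abs_mul, abs_inv, abs_norm, mul_inv_cancel_left₀ hna.ne']
  calc η * ‖a‖ ≤ (∫ ω, |⟪‖a‖⁻¹ • a, Y ω⟫| ∂P) * ‖a‖ := by
        gcongr
        exact hunit _ (by rw [norm_smul, norm_inv, norm_norm, inv_mul_cancel₀ hna.ne'])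
    _ = ∫ ω, |⟪a, Y ω⟫| ∂P := by
        simp_rw [hscale, integral_const_mul, mul_comm]

end

theorem expectation_abs_inner_add_ge_half_eta_norm_general
    (q : ℕ) {Ω : Type*} [MeasurableSpace Ω]
    (P : Measure Ω) [IsProbabilityMeasure P]
    (W : Ω → EuclideanSpace ℝ (Fin q))
    (hWint : Integrable W P)
    (μ : EuclideanSpace ℝ (Fin q)) (hμ : μ = ∫ ω, W ω ∂P)
    (η : ℝ)
    (hsep : ∀ u : EuclideanSpace ℝ (Fin q), ‖u‖ = 1 → η ≤ ∫ ω, |⟪u, W ω - μ⟫| ∂P) :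
    ∀ (a : EuclideanSpace ℝ (Fin q)) (b : ℝ),
      η / 2 * ‖a‖ ≤ ∫ ω, |⟪a, W ω⟫ + b| ∂P := by
  intro a b
  subst hμ
  have hX : Integrable (fun ω => ⟪a, W ω - ∫ ω', W ω' ∂P⟫) P :=
    (hWint.sub (integrable_const _)).const_inner a
  calc η / 2 * ‖a‖ = η * ‖a‖ / 2 := by ring
    _ ≤ (∫ ω, |⟪a, W ω - ∫ ω', W ω' ∂P⟫| ∂P) / 2 := by
        gcongr; exact mul_norm_le_integral_abs_inner hsep a
    _ ≤ ∫ ω, |⟪a, W ω - ∫ ω', W ω' ∂P⟫ + (b + ⟪a, ∫ ω', W ω' ∂P⟫)| ∂P :=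
        half_integral_abs_le_integral_abs_add_const hX (integral_inner_sub_integral hWint a) _
    _ = ∫ ω, |⟪a, W ω⟫ + b| ∂P := by
        congr 1 with ω
        rw [inner_sub_right, sub_add_add_cancel]

/-- Let `W : Ω → ℝ^q` be integrable with mean `μ`, and suppose `E|⟨u, W − μ⟩| ≥ η > 0`
for every unit vector `u`.  Then `E|⟨a, W⟩ + b| ≥ (η/2)‖a‖` for all `a ∈ ℝ^q`, `b ∈ ℝ`. -/
theorem expectation_abs_inner_add_ge_half_eta_norm
    (q : ℕ) (hq : 1 ≤ q) {Ω : Type*} [MeasurableSpace Ω]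
    (P : Measure Ω) [IsProbabilityMeasure P]
    (W : Ω → EuclideanSpace ℝ (Fin q)) (hWmeas : Measurable W)
    (hWint : Integrable W P)
    (μ : EuclideanSpace ℝ (Fin q)) (hμ : μ = ∫ ω, W ω ∂P)
    (η : ℝ) (hη : 0 < η)
    (hsep : ∀ u : EuclideanSpace ℝ (Fin q), ‖u‖ = 1 → η ≤ ∫ ω, |⟪u, W ω - μ⟫| ∂P) :
    ∀ (a : EuclideanSpace ℝ (Fin q)) (b : ℝ),
      η / 2 * ‖a‖ ≤ ∫ ω, |⟪a, W ω⟫ + b| ∂P :=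
  expectation_abs_inner_add_ge_half_eta_norm_general q P W hWint μ hμ η hsep
end

section
/- If R ⊆ S^{q−1} is geodesically connected in the chord sense, then the cone C = {r·ρ : r ∈ [0, ∞), ρ ∈ R} generated by R is a convex subset of ℝ^q; if moreover R is closed, then C is closed. -/
/-!
The cone `C` over `R` is stable under nonnegative scaling, so it is convex as soon as it is
stable under addition. Writing `r • ρ + s • σ = (r + s) • (α • ρ + (1 - α) • σ)` with
`α = r / (r + s)`, the chord point `w = α • ρ + (1 - α) • σ` is either `0` or equal to
`‖w‖ • (‖w‖⁻¹ • w)`, whose direction lies in `R` by chord connectedness.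

When `R` lies on the unit sphere, `x ↦ ‖x‖⁻¹ • x` maps `C \ {0}` into `R` and is continuous
away from `0`; so a nonzero limit point `x` of `C` has `‖x‖⁻¹ • x ∈ closure R = R`, i.e. `x ∈ C`.
-/

open Set

variable {E : Type*} [NormedAddCommGroup E] [NormedSpace ℝ E]

def IsChordConnected (R : Set E) : Prop :=
  ∀ u ∈ R, ∀ v ∈ R, ∀ α ∈ Icc (0 : ℝ) 1,
    α • u + (1 - α) • v ≠ 0 → ‖α • u + (1 - α) • v‖⁻¹ • (α • u + (1 - α) • v) ∈ R

def rayCone (R : Set E) : Set E := {x | ∃ r : ℝ, 0 ≤ r ∧ ∃ ρ ∈ R, x = r • ρ}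

namespace rayCone

variable {R : Set E}

theorem smul_mem {r : ℝ} (hr : 0 ≤ r) {ρ : E} (hρ : ρ ∈ R) : r • ρ ∈ rayCone R :=
  ⟨r, hr, ρ, hρ, rfl⟩

theorem zero_mem_of_nonempty (hR : R.Nonempty) : (0 : E) ∈ rayCone R := by
  obtain ⟨ρ, hρ⟩ := hR
  simpa using smul_mem le_rfl hρ

theorem nonneg_smul_mem {c : ℝ} (hc : 0 ≤ c) {x : E} (hx : x ∈ rayCone R) :
    c • x ∈ rayCone R := by
  obtain ⟨r, hr, ρ, hρ, rfl⟩ := hx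
  simpa only [smul_smul] using smul_mem (mul_nonneg hc hr) hρ

theorem chord_mem (hR : IsChordConnected R) {ρ σ : E} (hρ : ρ ∈ R) (hσ : σ ∈ R)
    {α : ℝ} (hα : α ∈ Icc (0 : ℝ) 1) : α • ρ + (1 - α) • σ ∈ rayCone R := by
  set w := α • ρ + (1 - α) • σ
  by_cases hw : w = 0
  · simpa [hw] using zero_mem_of_nonempty ⟨ρ, hρ⟩
  · rw [← smul_inv_smul₀ (norm_ne_zero_iff.mpr hw) w]
    exact smul_mem (norm_nonneg w) (hR ρ hρ σ hσ α hα hw)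

theorem add_mem (hR : IsChordConnected R) {x y : E} (hx : x ∈ rayCone R)
    (hy : y ∈ rayCone R) : x + y ∈ rayCone R := by
  obtain ⟨r, hr, ρ, hρ, rfl⟩ := hx
  obtain ⟨s, hs, σ, hσ, rfl⟩ := hy
  rcases (add_nonneg hr hs).eq_or_lt with hrs | hrs
  · obtain ⟨rfl, rfl⟩ : r = 0 ∧ s = 0 := ⟨by linarith, by linarith⟩
    simpa using zero_mem_of_nonempty ⟨ρ, hρ⟩
  · have hα : r / (r + s) ∈ Icc (0 : ℝ) 1 :=
      ⟨div_nonneg hr hrs.le, div_le_one_of_le₀ (by linarith) hrs.le⟩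
    have hsplit : r • ρ + s • σ = (r + s) • ((r / (r + s)) • ρ + (1 - r / (r + s)) • σ) := by
      rw [one_sub_div hrs.ne', add_sub_cancel_left, smul_add, smul_smul, smul_smul,
        mul_div_cancel₀ _ hrs.ne', mul_div_cancel₀ _ hrs.ne']
    rw [hsplit]
    exact nonneg_smul_mem hrs.le (chord_mem hR hρ hσ hα)

theorem convex (hR : IsChordConnected R) : Convex ℝ (rayCone R) :=
  fun _ hx _ hy _ _ ha hb _ => add_mem hR (nonneg_smul_mem ha hx) (nonneg_smul_mem hb hy)

theorem normalize_mem (hR : R ⊆ Metric.sphere 0 1) {x : E} (hx : x ∈ rayCone R)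
    (hx0 : x ≠ 0) : ‖x‖⁻¹ • x ∈ R := by
  obtain ⟨r, hr, ρ, hρ, rfl⟩ := hx
  have hr0 : r ≠ 0 := by rintro rfl; simp at hx0
  rw [norm_smul, mem_sphere_zero_iff_norm.mp (hR hρ), mul_one, Real.norm_of_nonneg hr,
    inv_smul_smul₀ hr0]
  exact hρ

theorem isClosed (hR : R ⊆ Metric.sphere 0 1) (hRc : IsClosed R) : IsClosed (rayCone R) := by
  refine isClosed_of_closure_subset fun x hx => ?_
  by_cases hx0 : x = 0
  · obtain ⟨_, ⟨r, -, ρ, hρ, -⟩⟩ := closure_nonempty_iff.mp ⟨x, hx⟩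
    exact hx0 ▸ zero_mem_of_nonempty ⟨ρ, hρ⟩
  · have hcont : ContinuousAt (fun y : E => ‖y‖⁻¹ • y) x :=
      (continuous_norm.continuousAt.inv₀ (norm_ne_zero_iff.mpr hx0)).smul continuousAt_id
    have hmaps : MapsTo (fun y : E => ‖y‖⁻¹ • y) ({0}ᶜ ∩ rayCone R) R :=
      fun y hy => normalize_mem hR hy.2 hy.1
    have hdir : ‖x‖⁻¹ • x ∈ R := hRc.closure_subset <|
      hcont.continuousWithinAt.mem_closure (isOpen_compl_singleton.inter_closure ⟨hx0, hx⟩) hmaps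
    rw [← smul_inv_smul₀ (norm_ne_zero_iff.mpr hx0) x]
    exact smul_mem (norm_nonneg x) hdir

end rayCone

theorem cone_of_geodesically_connected_convex_and_closed_general
    (q : ℕ)
    (R : Set (EuclideanSpace ℝ (Fin q)))
    (hRsub : R ⊆ Metric.sphere (0 : EuclideanSpace ℝ (Fin q)) 1)
    (hRgeo : ∀ u ∈ R, ∀ v ∈ R, ∀ α ∈ Set.Icc (0 : ℝ) 1,
      α • u + (1 - α) • v ≠ 0 →
        ‖α • u + (1 - α) • v‖⁻¹ • (α • u + (1 - α) • v) ∈ R) :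
    Convex ℝ {x : EuclideanSpace ℝ (Fin q) | ∃ r : ℝ, 0 ≤ r ∧ ∃ ρ ∈ R, x = r • ρ} ∧
    (IsClosed R →
      IsClosed {x : EuclideanSpace ℝ (Fin q) | ∃ r : ℝ, 0 ≤ r ∧ ∃ ρ ∈ R, x = r • ρ}) :=
  ⟨rayCone.convex hRgeo, rayCone.isClosed hRsub⟩

/-- If `R ⊆ S^{q−1}` is geodesically connected in the chord sense, then the cone
`C = {r·ρ : r ≥ 0, ρ ∈ R}` generated by `R` is convex; if moreover `R` is closed,
then `C` is closed. -/
theorem cone_of_geodesically_connected_convex_and_closed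
    (q : ℕ) (hq : 1 ≤ q)
    (R : Set (EuclideanSpace ℝ (Fin q)))
    (hRsub : R ⊆ Metric.sphere (0 : EuclideanSpace ℝ (Fin q)) 1)
    (hRgeo : ∀ u ∈ R, ∀ v ∈ R, ∀ α ∈ Set.Icc (0 : ℝ) 1,
      α • u + (1 - α) • v ≠ 0 →
        ‖α • u + (1 - α) • v‖⁻¹ • (α • u + (1 - α) • v) ∈ R) :
    Convex ℝ {x : EuclideanSpace ℝ (Fin q) | ∃ r : ℝ, 0 ≤ r ∧ ∃ ρ ∈ R, x = r • ρ} ∧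
    (IsClosed R →
      IsClosed {x : EuclideanSpace ℝ (Fin q) | ∃ r : ℝ, 0 ≤ r ∧ ∃ ρ ∈ R, x = r • ρ}) :=
  cone_of_geodesically_connected_convex_and_closed_general q R hRsub hRgeo
end
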